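/- Let (w̃, m̃, H̃) solve the cell problem: for each x ∈ 𝕋^d and Λ ∈ ℝ^d, (1/2)|Λ+∇_y w̃(x,Λ,y)|² + V(x,y) = ln m̃(x,Λ,y) + H̃(x,Λ) and −div_y(m̃(Λ+∇_y w̃)) = 0 in 𝒴^d with ∫_{𝒴^d} m̃ dy = 1, m̃ > 0. Then for every x ∈ 𝕋^d, Λ ∈ ℝ^d and y ∈ 𝒴^d, m̃(x,Λ,y) ≥ exp( inf_{(x,y)} V(x,y) − sup_{(x,y)} V(x,y) − |Λ|²/2 ). -/

import Mathlib

open MeasureTheory Filter Topology Function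

noncomputable section
set_option maxRecDepth 4000

/-- The unit cell `𝒴^d = [0,1)^d`. -/
def cube (d : ℕ) : Set (Fin d → ℝ) := Set.univ.pi fun _ => Set.Ico (0 : ℝ) 1

/-- `ℤ^d`-periodicity of a function on `ℝ^d`; functions on the torus `𝕋^d`
(and `𝒴^d`-periodic functions) are identified with such functions. -/
def ZPer {d : ℕ} (f : (Fin d → ℝ) → ℝ) : Prop :=
  ∀ (x : Fin d → ℝ) (k : Fin d → ℤ), f (fun i => x i + (k i : ℝ)) = f x

/-- The `i`-th partial derivative. -/
def pder {d : ℕ} (i : Fin d) (f : (Fin d → ℝ) → ℝ) (x : Fin d → ℝ) : ℝ :=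
  fderiv ℝ f x (Pi.single i 1)

/-- `V : 𝕋^d × ℝ^d → ℝ` smooth, `𝒴^d`-periodic in the second variable
(and periodic in the first, i.e. defined on the torus). -/
def SmoothV {d : ℕ} (V : (Fin d → ℝ) → (Fin d → ℝ) → ℝ) : Prop :=
  ContDiff ℝ (⊤ : ℕ∞) (uncurry V) ∧ (∀ y, ZPer fun x => V x y) ∧ (∀ x, ZPer (V x))

/-- `sup_{(x,y) ∈ 𝕋^d × 𝒴^d} V (x,y)` (by periodicity, the sup over all of `ℝ^d × ℝ^d`). -/
def supV {d : ℕ} (V : (Fin d → ℝ) → (Fin d → ℝ) → ℝ) : ℝ :=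
  ⨆ q : (Fin d → ℝ) × (Fin d → ℝ), V q.1 q.2

/-- `inf_{(x,y) ∈ 𝕋^d × 𝒴^d} V (x,y)`. -/
def infV {d : ℕ} (V : (Fin d → ℝ) → (Fin d → ℝ) → ℝ) : ℝ :=
  ⨅ q : (Fin d → ℝ) × (Fin d → ℝ), V q.1 q.2

lemma cube_measurable {d : ℕ} : MeasurableSet (cube d) :=
  MeasurableSet.univ_pi fun _ => measurableSet_Ico

lemma cube_subset_Icc {d : ℕ} : cube d ⊆ Set.Icc (0 : Fin d → ℝ) 1 := by
  rw [← Set.pi_univ_Icc]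
  exact Set.pi_mono fun i _ => Set.Ico_subset_Icc_self

lemma volume_cube {d : ℕ} : volume (cube d) = 1 := by
  rw [cube, volume_pi_pi]
  simp [Real.volume_Ico]

lemma integrableOn_cube {d : ℕ} {f : (Fin d → ℝ) → ℝ} (hf : Continuous f) :
    IntegrableOn f (cube d) := by
  exact (hf.continuousOn.integrableOn_compact isCompact_Icc).mono_set cube_subset_Icc

lemma continuous_pder {d : ℕ} (i : Fin d) {f : (Fin d → ℝ) → ℝ} (hf : ContDiff ℝ 1 f) :
    Continuous (pder i f) := by
  have h := hf.continuous_fderiv one_ne_zero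
  exact h.clm_apply continuous_const

lemma contDiff_pder {d : ℕ} (i : Fin d) {f : (Fin d → ℝ) → ℝ} (hf : ContDiff ℝ 2 f) :
    ContDiff ℝ 1 (pder i f) := by
  exact (hf.fderiv_right (by norm_num)).clm_apply contDiff_const

lemma ZPer.pder_per {d : ℕ} (i : Fin d) {f : (Fin d → ℝ) → ℝ} (hf : ContDiff ℝ 1 f)
    (hp : ZPer f) : ZPer (pder i f) := by
  intro x k
  set c : Fin d → ℝ := fun i => (k i : ℝ) with hc
  have hfun : (fun y : Fin d → ℝ => f (y + c)) = f := by
    funext y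
    exact hp y k
  have h1 : (fun j => x j + (k j : ℝ)) = x + c := rfl
  unfold pder
  rw [h1, ← hfun]
  have : ∀ z : Fin d → ℝ, fderiv ℝ (fun y => f (y + c)) z = fderiv ℝ f (z + c) := by
    intro z
    have hd : DifferentiableAt ℝ f (z + c) := (hf.differentiable one_ne_zero).differentiableAt
    have := hd.hasFDerivAt.comp z ((hasFDerivAt_id z).add_const c)
    simp only [ContinuousLinearMap.comp_id] at this
    exact this.fderiv
  rw [this x]
  congr 1
  rw [hfun]

lemma pder_mul {d : ℕ} (i : Fin d) {a b : (Fin d → ℝ) → ℝ}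
    (ha : ContDiff ℝ 1 a) (hb : ContDiff ℝ 1 b) (y : Fin d → ℝ) :
    pder i (fun z => a z * b z) y = pder i a y * b y + a y * pder i b y := by
  unfold pder
  rw [fderiv_fun_mul ((ha.differentiable one_ne_zero).differentiableAt)
    ((hb.differentiable one_ne_zero).differentiableAt)]
  simp [mul_comm]
  ring

lemma mem_cube_insertNth {n : ℕ} (i : Fin (n + 1)) (t : ℝ) (z : Fin n → ℝ) :
    i.insertNth t z ∈ cube (n + 1) ↔ t ∈ Set.Ico (0:ℝ) 1 ∧ z ∈ cube n := by
  simp only [cube, Set.mem_univ_pi]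
  constructor
  · intro h
    refine ⟨?_, fun j => ?_⟩
    · have := h i; simpa using this
    · have := h (i.succAbove j); simpa using this
  · rintro ⟨h1, h2⟩ j
    refine Fin.succAboveCases i ?_ ?_ j
    · simpa using h1
    · intro j; simpa using h2 j

lemma insertNth_line {n : ℕ} (i : Fin (n + 1)) (z : Fin n → ℝ) (t : ℝ) :
    Fin.insertNth (α := fun _ => ℝ) i t z = Fin.insertNth (α := fun _ => ℝ) i 0 z + t • (Pi.single i 1 : Fin (n+1) → ℝ) := by
  funext j
  refine Fin.succAboveCases i ?_ ?_ j
  · simp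
  · intro j
    simp [Pi.single_eq_of_ne (Fin.succAbove_ne i j)]

lemma inner_ftc {n : ℕ} (i : Fin (n + 1)) {f : (Fin (n + 1) → ℝ) → ℝ}
    (hf : ContDiff ℝ 1 f) (hp : ZPer f) (z : Fin n → ℝ) :
    ∫ t in Set.Ico (0:ℝ) 1, pder i f (i.insertNth t z) = 0 := by
  have hA : ∀ t : ℝ, HasDerivAt (fun s => f (i.insertNth s z)) (pder i f (i.insertNth t z)) t := by
    intro t
    have hA : HasDerivAt (fun s : ℝ => Fin.insertNth (α := fun _ => ℝ) i s z) (Pi.single i 1) t := by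
      rw [show (fun s : ℝ => Fin.insertNth (α := fun _ => ℝ) i s z)
          = fun s : ℝ => Fin.insertNth (α := fun _ => ℝ) i 0 z + s • (Pi.single i 1 : Fin (n+1) → ℝ)
        from funext fun s => insertNth_line i z s]
      have h2 : HasDerivAt (fun s : ℝ => Fin.insertNth (α := fun _ => ℝ) i 0 z + s • (Pi.single i 1 : Fin (n+1) → ℝ))
          ((1:ℝ) • (Pi.single i 1 : Fin (n+1) → ℝ)) t :=
        ((hasDerivAt_id t).smul_const ((Pi.single i 1 : Fin (n+1) → ℝ))).const_add _
      rw [one_smul] at h2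
      exact h2
    have hd : HasFDerivAt f (fderiv ℝ f (i.insertNth t z)) (i.insertNth t z) :=
      ((hf.differentiable one_ne_zero).differentiableAt).hasFDerivAt
    exact hd.comp_hasDerivAt t hA
  have hcont : Continuous fun t => pder i f (i.insertNth t z) :=
    (continuous_pder i hf).comp (Continuous.finInsertNth (A := fun _ => ℝ) i continuous_id (continuous_const : Continuous fun _ : ℝ => z))
  have h1 : ∫ t in Set.Ico (0:ℝ) 1, pder i f (i.insertNth t z)
      = ∫ t in (0:ℝ)..1, pder i f (i.insertNth t z) := by
    rw [MeasureTheory.integral_Ico_eq_integral_Ioo,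
      intervalIntegral.integral_of_le (by norm_num : (0:ℝ) ≤ 1),
      MeasureTheory.integral_Ioc_eq_integral_Ioo]
  rw [h1, intervalIntegral.integral_eq_sub_of_hasDerivAt (fun t _ => hA t)
    (hcont.intervalIntegrable 0 1)]
  have : Fin.insertNth (α := fun _ => ℝ) i 1 z = fun j => Fin.insertNth (α := fun _ => ℝ) i 0 z j + ((Pi.single i 1 : Fin (n+1) → ℤ) j : ℝ) := by
    funext j
    refine Fin.succAboveCases i ?_ ?_ j
    · simp
    · intro j
      simp [Pi.single_eq_of_ne (Fin.succAbove_ne i j)]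
  rw [this, hp (i.insertNth 0 z) (Pi.single i 1), sub_self]

lemma setIntegral_swap' {B : Type*} [MeasurableSpace B] {ν : Measure B} [SFinite ν]
    (f : ℝ × B → ℝ) (s : Set ℝ) (t : Set B) :
    ∫ z in s ×ˢ t, f z ∂((volume : Measure ℝ).prod ν)
      = ∫ z in t ×ˢ s, f z.swap ∂(ν.prod volume) := by
  rw [← Measure.prod_restrict, ← Measure.prod_restrict, ← integral_prod_swap f]

lemma integral_pder_cube {d : ℕ} (i : Fin d) {f : (Fin d → ℝ) → ℝ}
    (hf : ContDiff ℝ 1 f) (hp : ZPer f) :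
    ∫ y in cube d, pder i f y = 0 := by
  obtain ⟨n, rfl⟩ : ∃ n, d = n + 1 := ⟨d - 1, by have := i.pos; omega⟩
  set e := MeasurableEquiv.piFinSuccAbove (fun _ : Fin (n+1) => ℝ) i with he
  have hmp : MeasurePreserving e volume ((volume : Measure ℝ).prod (volume : Measure (Fin n → ℝ))) := by
    have := measurePreserving_piFinSuccAbove (fun _ : Fin (n+1) => (volume : Measure ℝ)) i
    exact this
  set S : Set (ℝ × (Fin n → ℝ)) := Set.Ico (0:ℝ) 1 ×ˢ cube n with hS
  set F : ℝ × (Fin n → ℝ) → ℝ := fun p => pder i f (Fin.insertNth (α := fun _ => ℝ) i p.1 p.2) with hF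
  have hg : ∀ y : Fin (n+1) → ℝ, S.indicator F (e y) = (cube (n+1)).indicator (pder i f) y := by
    intro y
    have h1 : Fin.insertNth (α := fun _ => ℝ) i (y i) (fun j => y (i.succAbove j)) = y := by
      funext j
      refine Fin.succAboveCases i ?_ ?_ j
      · simp
      · intro j; simp
    have h2 : e y ∈ S ↔ y ∈ cube (n+1) := by
      rw [hS]
      show ((y i, fun j => y (i.succAbove j)) : ℝ × (Fin n → ℝ)) ∈ _ ↔ _
      rw [Set.mem_prod]
      rw [← mem_cube_insertNth i (y i) (fun j => y (i.succAbove j)), h1]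
    by_cases hy : y ∈ cube (n+1)
    · rw [Set.indicator_of_mem (h2.mpr hy), Set.indicator_of_mem hy]
      show pder i f (Fin.insertNth (α := fun _ => ℝ) i (y i) (fun j => y (i.succAbove j))) = _
      rw [h1]
    · rw [Set.indicator_of_notMem (fun h => hy (h2.mp h)), Set.indicator_of_notMem hy]
  have hFc : Continuous F :=
    (continuous_pder i hf).comp
      (Continuous.finInsertNth (A := fun _ => ℝ) i continuous_fst continuous_snd)
  have hFint : IntegrableOn F S ((volume : Measure ℝ).prod (volume : Measure (Fin n → ℝ))) := by
    have hcomp : IsCompact (Set.Icc (0:ℝ) 1 ×ˢ Set.Icc (0 : Fin n → ℝ) 1) :=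
      isCompact_Icc.prod isCompact_Icc
    have := (hFc.continuousOn.integrableOn_compact hcomp (μ := (volume : Measure ℝ).prod volume))
    exact this.mono_set (Set.prod_mono Set.Ico_subset_Icc_self cube_subset_Icc)
  calc ∫ y in cube (n+1), pder i f y
      = ∫ y, (cube (n+1)).indicator (pder i f) y := (integral_indicator cube_measurable).symm
    _ = ∫ y, S.indicator F (e y) := by simp_rw [hg]
    _ = ∫ p, S.indicator F p ∂((volume : Measure ℝ).prod volume) :=
        hmp.integral_comp e.measurableEmbedding _
    _ = ∫ p in S, F p ∂((volume : Measure ℝ).prod volume) :=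
        integral_indicator (measurableSet_Ico.prod cube_measurable)
    _ = ∫ q in cube n ×ˢ Set.Ico (0:ℝ) 1, F q.swap ∂((volume : Measure (Fin n → ℝ)).prod volume) :=
        setIntegral_swap' F _ _
    _ = ∫ z in cube n, ∫ t in Set.Ico (0:ℝ) 1, F (t, z) := by
        rw [setIntegral_prod]
        · rfl
        · exact (hFc.comp continuous_swap).continuousOn.integrableOn_compact
            (isCompact_Icc.prod isCompact_Icc) |>.mono_set
            (Set.prod_mono cube_subset_Icc Set.Ico_subset_Icc_self)
    _ = 0 := by
        have : ∀ z : Fin n → ℝ, ∫ t in Set.Ico (0:ℝ) 1, F (t, z) = 0 := fun z =>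
          inner_ftc i hf hp z
        simp_rw [this, integral_zero]


lemma sub_one_le_mul_log {t : ℝ} (ht : 0 < t) : t - 1 ≤ t * Real.log t := by
  have h := Real.add_one_le_exp (-Real.log t)
  rw [Real.exp_neg, Real.exp_log ht] at h
  have h2 : t * (-Real.log t + 1) ≤ t * t⁻¹ := mul_le_mul_of_nonneg_left h ht.le
  rw [mul_inv_cancel₀ ht.ne'] at h2
  nlinarith

lemma V_bounds {d : ℕ} (V : (Fin d → ℝ) → (Fin d → ℝ) → ℝ) (hV : SmoothV V) :
    (∀ a b, infV V ≤ V a b) ∧ (∀ a b, V a b ≤ supV V) := by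
  have hc : Continuous (uncurry V) := hV.1.continuous
  have hK : IsCompact (Set.Icc (0 : Fin d → ℝ) 1 ×ˢ Set.Icc (0 : Fin d → ℝ) 1) :=
    isCompact_Icc.prod isCompact_Icc
  have hsub : Set.range (fun q : (Fin d → ℝ) × (Fin d → ℝ) => V q.1 q.2)
      ⊆ uncurry V '' (Set.Icc (0 : Fin d → ℝ) 1 ×ˢ Set.Icc (0 : Fin d → ℝ) 1) := by
    rintro - ⟨⟨a, b⟩, rfl⟩
    set a' : Fin d → ℝ := fun i => Int.fract (a i) with ha'
    set b' : Fin d → ℝ := fun i => Int.fract (b i) with hb'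
    have h1 : V a b = V a' b' := by
      have e1 : V a' b = V a b := by
        have h := hV.2.1 b a' (fun i => ⌊a i⌋)
        simp only at h
        rw [← h]
        congr 1
        funext i
        exact Int.fract_add_floor (a i)
      have e2 : V a' b' = V a' b := by
        have h := hV.2.2 a' b' (fun i => ⌊b i⌋)
        rw [← h]
        congr 1
        funext i
        exact Int.fract_add_floor (b i)
      rw [e2, e1]
    show V a b ∈ _
    rw [h1]
    refine ⟨(a', b'), ⟨?_, ?_⟩, rfl⟩ <;>
      exact ⟨fun i => (Int.fract_nonneg _), fun i => (Int.fract_lt_one _).le⟩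
  have hbdd : BddAbove (Set.range (fun q : (Fin d → ℝ) × (Fin d → ℝ) => V q.1 q.2)) :=
    ((hK.image hc).bddAbove).mono hsub
  have hbdd' : BddBelow (Set.range (fun q : (Fin d → ℝ) × (Fin d → ℝ) => V q.1 q.2)) :=
    ((hK.image hc).bddBelow).mono hsub
  exact ⟨fun a b => ciInf_le hbdd' ⟨a, b⟩, fun a b => le_ciSup hbdd ⟨a, b⟩⟩


/-- `(w, m, H)` is a classical solution of the cell problem at `(x, Λ)`:
`|Λ+∇_y w|²/2 + V(x,y) = ln m + H`, `-div_y(m (Λ+∇_y w)) = 0` in `𝒴^d`, `∫_{𝒴^d} m = 1`. -/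
def CellSolAt {d : ℕ} (V : (Fin d → ℝ) → (Fin d → ℝ) → ℝ)
    (x Λ : Fin d → ℝ) (w m : (Fin d → ℝ) → ℝ) (H : ℝ) : Prop :=
  ContDiff ℝ 2 w ∧ ZPer w ∧ ContDiff ℝ 1 m ∧ ZPer m ∧ (∀ y, 0 < m y) ∧
  (∀ y, (∑ i, (Λ i + pder i w y) ^ 2) / 2 + V x y = Real.log (m y) + H) ∧
  (∀ y, (∑ i, pder i (fun z => m z * (Λ i + pder i w z)) y) = 0) ∧
  (∫ y in cube d, m y) = 1

/-- the pointwise lower bound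
`m̃(x,Λ,y) ≥ exp(inf V − sup V − |Λ|²/2)` for solutions of the cell problem. -/
theorem stmt12 {d : ℕ} (V : (Fin d → ℝ) → (Fin d → ℝ) → ℝ) (hV : SmoothV V)
    (w m : (Fin d → ℝ) → (Fin d → ℝ) → (Fin d → ℝ) → ℝ)
    (H : (Fin d → ℝ) → (Fin d → ℝ) → ℝ)
    (hsol : ∀ x Λ, CellSolAt V x Λ (w x Λ) (m x Λ) (H x Λ)) :
    ∀ (x Λ y : Fin d → ℝ),
      Real.exp (infV V - supV V - (∑ i, (Λ i) ^ 2) / 2) ≤ m x Λ y := by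
  intro x Λ y₀
  obtain ⟨hVlo, hVhi⟩ := V_bounds V hV
  obtain ⟨hw, hwper, hm, hmper, hmpos, hHJB, hdiv, hint⟩ := hsol x Λ
  set W := w x Λ with hWdef
  set M := m x Λ with hMdef
  set H₀ := H x Λ with hH₀def
  -- continuity facts
  have hw1 : ContDiff ℝ 1 W := hw.of_le (by norm_num)
  have cg : ∀ i, Continuous (pder i W) := fun i => continuous_pder i hw1
  have cgC1 : ∀ i, ContDiff ℝ 1 (pder i W) := fun i => contDiff_pder i hw
  have cM : Continuous M := hm.continuous
  have cVx : Continuous (fun y => V x y) :=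
    hV.1.continuous.comp (continuous_const.prodMk continuous_id)
  have clog : Continuous (fun y => Real.log (M y)) := cM.log fun y => (hmpos y).ne'
  have C1F : ∀ i, ContDiff ℝ 1 (fun z => M z * (Λ i + pder i W z)) := fun i =>
    hm.mul (contDiff_const.add (cgC1 i))
  have cF : ∀ i, Continuous (fun z => M z * (Λ i + pder i W z)) := fun i =>
    (C1F i).continuous
  have cS : Continuous (fun y => ∑ i, (Λ i + pder i W y) ^ 2) :=
    continuous_finset_sum _ fun i _ => (continuous_const.add (cg i)).pow 2
  set T : ℝ := ∑ i, (Λ i) ^ 2 with hT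
  -- Step 2 : the divergence identity integrated
  have hzero : ∫ y in cube d, (∑ i, pder i W y * (M y * (Λ i + pder i W y))) = 0 := by
    have hGzero : ∀ i : Fin d,
        ∫ y in cube d, pder i (fun z => W z * (M z * (Λ i + pder i W z))) y = 0 := by
      intro i
      refine integral_pder_cube i (hw1.mul (C1F i)) ?_
      intro z k
      show W _ * (M _ * (Λ i + pder i W _)) = _
      rw [hwper z k, hmper z k, ZPer.pder_per i hw1 hwper z k]
    have hsum : ∀ y, (∑ i, pder i (fun z => W z * (M z * (Λ i + pder i W z))) y)
        = (∑ i, pder i W y * (M y * (Λ i + pder i W y)))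
          + W y * (∑ i, pder i (fun z => M z * (Λ i + pder i W z)) y) := by
      intro y
      rw [Finset.mul_sum, ← Finset.sum_add_distrib]
      refine Finset.sum_congr rfl fun i _ => ?_
      exact pder_mul i hw1 (C1F i) y
    have h1 : ∫ y in cube d, (∑ i, pder i W y * (M y * (Λ i + pder i W y)))
        = ∫ y in cube d, (∑ i, pder i (fun z => W z * (M z * (Λ i + pder i W z))) y) := by
      refine integral_congr_ae (Filter.Eventually.of_forall fun y => ?_)
      show (∑ i, pder i W y * (M y * (Λ i + pder i W y)))
        = ∑ i, pder i (fun z => W z * (M z * (Λ i + pder i W z))) y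
      rw [hsum y, hdiv y, mul_zero, add_zero]
    rw [h1]
    rw [integral_finset_sum _ (fun i _ => integrableOn_cube
      (continuous_pder i (hw1.mul (C1F i))))]
    exact Finset.sum_eq_zero fun i _ => hGzero i
  -- Step 3 : kinetic energy bound
  set A : ℝ := ∫ y in cube d, M y * ((∑ i, (Λ i + pder i W y) ^ 2) / 2) with hA
  have hMnonneg : ∀ y, 0 ≤ M y := fun y => (hmpos y).le
  have hAle : A ≤ T / 2 := by
    have hsplit : ∀ y : Fin d → ℝ, M y * (∑ i, (Λ i + pder i W y) ^ 2)
        = (∑ i, pder i W y * (M y * (Λ i + pder i W y)))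
          + M y * (∑ i, (Λ i + pder i W y) * Λ i) := by
      intro y
      simp_rw [Finset.mul_sum, ← Finset.sum_add_distrib]
      refine Finset.sum_congr rfl fun i _ => ?_
      ring
    have hcross : ∀ y : Fin d → ℝ, M y * (∑ i, (Λ i + pder i W y) * Λ i)
        ≤ M y * ((∑ i, (Λ i + pder i W y) ^ 2) / 2) + M y * (T / 2) := by
      intro y
      rw [← mul_add]
      refine mul_le_mul_of_nonneg_left ?_ (hMnonneg y)
      have : (∑ i, (Λ i + pder i W y) ^ 2) / 2 + T / 2
          = ∑ i, ((Λ i + pder i W y) ^ 2 / 2 + (Λ i) ^ 2 / 2) := by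
        rw [Finset.sum_add_distrib, ← Finset.sum_div, ← Finset.sum_div, hT]
      rw [this]
      refine Finset.sum_le_sum fun i _ => ?_
      nlinarith [sq_nonneg (Λ i + pder i W y - Λ i)]
    have h2A : ∫ y in cube d, M y * (∑ i, (Λ i + pder i W y) ^ 2) = 2 * A := by
      rw [hA, ← integral_const_mul]
      refine integral_congr_ae (Filter.Eventually.of_forall fun y => ?_)
      ring
    have hsum2 : ∫ y in cube d, M y * (∑ i, (Λ i + pder i W y) ^ 2)
        = ∫ y in cube d, M y * (∑ i, (Λ i + pder i W y) * Λ i) := by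
      have : ∫ y in cube d, M y * (∑ i, (Λ i + pder i W y) ^ 2)
          = (∫ y in cube d, (∑ i, pder i W y * (M y * (Λ i + pder i W y))))
            + ∫ y in cube d, M y * (∑ i, (Λ i + pder i W y) * Λ i) := by
        rw [← integral_add]
        · exact integral_congr_ae (Filter.Eventually.of_forall fun y => hsplit y)
        · exact integrableOn_cube (continuous_finset_sum _ fun i _ => (cg i).mul (cF i))
        · exact integrableOn_cube (cM.mul (continuous_finset_sum _ fun i _ =>
            ((continuous_const.add (cg i)).mul continuous_const)))
      rw [this, hzero, zero_add]
    have hrhs : ∫ y in cube d, M y * (∑ i, (Λ i + pder i W y) * Λ i)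
        ≤ A + T / 2 := by
      have hle : ∫ y in cube d, M y * (∑ i, (Λ i + pder i W y) * Λ i)
          ≤ ∫ y in cube d, (M y * ((∑ i, (Λ i + pder i W y) ^ 2) / 2) + M y * (T / 2)) := by
        refine setIntegral_mono ?_ ?_ hcross
        · exact integrableOn_cube (cM.mul (continuous_finset_sum _ fun i _ =>
            ((continuous_const.add (cg i)).mul continuous_const)))
        · exact integrableOn_cube ((cM.mul (cS.div_const 2)).add (cM.mul continuous_const))
      have heq : ∫ y in cube d, (M y * ((∑ i, (Λ i + pder i W y) ^ 2) / 2) + M y * (T / 2))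
          = A + T / 2 := by
        rw [integral_add (integrableOn_cube (f := fun y => M y * ((∑ i, (Λ i + pder i W y) ^ 2) / 2)) (cM.mul (cS.div_const 2)))
          (integrableOn_cube (f := fun y => M y * (T / 2)) (cM.mul continuous_const)), ← hA,
          integral_mul_const, hint, one_mul]
      rw [heq] at hle
      exact hle
    linarith [h2A ▸ hsum2 ▸ hrhs]
  -- Step 4 : upper bound on H₀
  have hH₀le : H₀ ≤ supV V + T / 2 := by
    have hMV : ∫ y in cube d, M y * V x y ≤ supV V := by
      have h1 : ∫ y in cube d, M y * V x y ≤ ∫ y in cube d, M y * supV V := by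
        refine setIntegral_mono (integrableOn_cube (cM.mul cVx))
          (integrableOn_cube (cM.mul continuous_const)) fun y => ?_
        exact mul_le_mul_of_nonneg_left (hVhi x y) (hMnonneg y)
      rw [integral_mul_const, hint, one_mul] at h1
      exact h1
    have hEnt : 0 ≤ ∫ y in cube d, M y * Real.log (M y) := by
      have h1 : ∫ y in cube d, (M y - 1) ≤ ∫ y in cube d, M y * Real.log (M y) := by
        refine setIntegral_mono (integrableOn_cube (cM.sub continuous_const))
          (integrableOn_cube (cM.mul clog)) fun y => ?_
        exact sub_one_le_mul_log (hmpos y)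
      have h2 : ∫ y in cube d, (M y - 1) = 0 := by
        rw [integral_sub (integrableOn_cube cM) (integrableOn_cube continuous_const),
          hint, setIntegral_const, measureReal_def, volume_cube]
        simp
      linarith
    have hkey : A + (∫ y in cube d, M y * V x y)
        = (∫ y in cube d, M y * Real.log (M y)) + H₀ := by
      have hup : ∫ y in cube d, (M y * ((∑ i, (Λ i + pder i W y) ^ 2) / 2) + M y * V x y)
          = ∫ y in cube d, (M y * Real.log (M y) + M y * H₀) := by
        refine integral_congr_ae (Filter.Eventually.of_forall fun y => ?_)
        have h := hHJB y
        have : M y * ((∑ i, (Λ i + pder i W y) ^ 2) / 2 + V x y)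
            = M y * (Real.log (M y) + H₀) := by rw [h]
        show M y * ((∑ i, (Λ i + pder i W y) ^ 2) / 2) + M y * V x y
          = M y * Real.log (M y) + M y * H₀
        linear_combination this
      rw [integral_add (integrableOn_cube (f := fun y => M y * ((∑ i, (Λ i + pder i W y) ^ 2) / 2)) (cM.mul (cS.div_const 2)))
          (integrableOn_cube (f := fun y => M y * V x y) (cM.mul cVx)),
        integral_add (integrableOn_cube (f := fun y => M y * Real.log (M y)) (cM.mul clog))
          (integrableOn_cube (f := fun y => M y * H₀) (cM.mul continuous_const)),
        integral_mul_const, hint, one_mul] at hup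
      exact hup
    linarith
  -- Step 5 : conclusion
  have hlog : infV V - supV V - T / 2 ≤ Real.log (M y₀) := by
    have h := hHJB y₀
    have hSnn : 0 ≤ (∑ i, (Λ i + pder i W y₀) ^ 2) / 2 := by
      have : 0 ≤ ∑ i, (Λ i + pder i W y₀) ^ 2 :=
        Finset.sum_nonneg fun i _ => sq_nonneg _
      linarith
    have hVi := hVlo x y₀
    linarith
  calc Real.exp (infV V - supV V - T / 2) ≤ Real.exp (Real.log (M y₀)) :=
        Real.exp_le_exp.mpr hlog
    _ = M y₀ := Real.exp_log (hmpos y₀)
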